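/- Let C be an 𝔽₂-subspace of V and γ : C → ℂ with γ(c) ≠ 0 for all c ∈ C, such that the operators g(c) := γ(c)·W(c₁,c₂) (for c = (c₁|c₂) ∈ C) satisfy g(c) ∘ g(c') = g(c + c') for all c, c' ∈ C. For i ∈ V set Q_γ(i) := {f : 𝔽₂^n → ℂ | g(c)f = ε((i,c)ₛ)·f for all c ∈ C}. Then Q_γ(i) depends only on the coset of i modulo C^⊥ₛ, and the ℂ-vector space of all functions 𝔽₂^n → ℂ is the internal direct sum of the subspaces Q_γ(ī) over the cosets ī ∈ V/C^⊥ₛ. -/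

import Mathlib

open Finset

/-- `V = 𝔽₂ⁿ × 𝔽₂ⁿ`, elements written `(a|b)`. -/
abbrev Vn (n : ℕ) : Type := (Fin n → ZMod 2) × (Fin n → ZMod 2)

/-- The symplectic inner product `((a|b),(a'|b'))ₛ = a·b' + a'·b`. -/
def symp {n : ℕ} (v w : Vn n) : ZMod 2 :=
  (∑ i, v.1 i * w.2 i) + (∑ i, w.1 i * v.2 i)

lemma symp_add_left {n : ℕ} (a b s : Vn n) : symp (a + b) s = symp a s + symp b s := by
  simp only [symp, Prod.fst_add, Prod.snd_add, Pi.add_apply, add_mul, mul_add,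
    Finset.sum_add_distrib]
  ring

lemma symp_smul_left {n : ℕ} (c : ZMod 2) (v s : Vn n) : symp (c • v) s = c * symp v s := by
  simp only [symp, Prod.smul_fst, Prod.smul_snd, Pi.smul_apply, smul_eq_mul, mul_add,
    Finset.mul_sum]
  congr 1
  · exact Finset.sum_congr rfl fun i _ => by ring
  · exact Finset.sum_congr rfl fun i _ => by ring

/-- The symplectic orthogonal `S^⊥ₛ` of a subset `S ⊆ V`, as an `𝔽₂`-subspace of `V`. -/
def sympOrtho {n : ℕ} (S : Set (Vn n)) : Submodule (ZMod 2) (Vn n) where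
  carrier := {v | ∀ s ∈ S, symp v s = 0}
  zero_mem' := by intro s hs; simp [symp]
  add_mem' := by
    intro a b ha hb s hs
    rw [Set.mem_setOf_eq] at *
    rw [symp_add_left, ha s hs, hb s hs, add_zero]
  smul_mem' := by
    intro c v hv s hs
    rw [Set.mem_setOf_eq] at *
    rw [symp_smul_left, hv s hs, mul_zero]

/-- `ε : 𝔽₂ → ℂ`, `ε(0) = 1`, `ε(1) = -1`. -/
def eps (x : ZMod 2) : ℂ := if x = 0 then 1 else -1

/-- Quantum weight of `(a|b)`: number of positions `i` with `(aᵢ,bᵢ) ≠ (0,0)`. -/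
def wQ {n : ℕ} (v : Vn n) : ℕ :=
  (Finset.univ.filter fun i => (v.1 i, v.2 i) ≠ ((0 : ZMod 2), (0 : ZMod 2))).card

/-- Quotient minimum norm `‖x̄‖ = min_{v ∈ x̄} w_Q(v)` on `V ⧸ H`. -/
noncomputable def qnorm {n : ℕ} (H : Submodule (ZMod 2) (Vn n)) (x : Vn n ⧸ H) : ℕ :=
  sInf {m | ∃ v : Vn n, (Submodule.Quotient.mk v : Vn n ⧸ H) = x ∧ wQ v = m}

/-- Quotient distance `d(x̄,ȳ) = ‖x̄ - ȳ‖` on `V ⧸ H`. -/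
noncomputable def qdist {n : ℕ} (H : Submodule (ZMod 2) (Vn n)) (x y : Vn n ⧸ H) : ℕ :=
  qnorm H (x - y)

/-- The operator `W(a,b)` acting on functions `𝔽₂ⁿ → ℂ`: `(W(a,b)f)(x) = ε(b·x)·f(x+a)`. -/
def Wop {n : ℕ} (a b : Fin n → ZMod 2) (f : (Fin n → ZMod 2) → ℂ) : (Fin n → ZMod 2) → ℂ :=
  fun x => eps (∑ i, b i * x i) * f (x + a)

/-- The joint eigenspace `Q(i)` of the operators `W(c₁,c₂)`, `(c₁|c₂) ∈ C`. -/
def Qset {n : ℕ} (C : Submodule (ZMod 2) (Vn n)) (i : Vn n) : Set ((Fin n → ZMod 2) → ℂ) :=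
  {f | ∀ c ∈ C, ∀ x, Wop c.1 c.2 f x = eps (symp i c) * f x}

/-- Joint eigenspace `Q_γ(i)` for the rescaled operators `g(c) = γ(c)·W(c₁,c₂)`. -/
noncomputable def QgamSub {n : ℕ} (C : Submodule (ZMod 2) (Vn n)) (γ : C → ℂ) (i : Vn n) :
    Submodule ℂ ((Fin n → ZMod 2) → ℂ) where
  carrier := {f | ∀ c : C, ∀ x,
    γ c * Wop (c : Vn n).1 (c : Vn n).2 f x = eps (symp i (c : Vn n)) * f x}
  zero_mem' := by intro c x; simp [Wop]
  add_mem' := by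
    intro f g hf hg c x
    have h1 := hf c x
    have h2 := hg c x
    simp only [Wop, Pi.add_apply] at h1 h2 ⊢
    linear_combination h1 + h2
  smul_mem' := by
    intro a f hf c x
    have h := hf c x
    simp only [Wop, Pi.smul_apply, smul_eq_mul] at h ⊢
    linear_combination a * h


/-! The maps `c ↦ g(c)` form a representation of the finite abelian group `C`, and `Q_γ(i)` is
its joint eigenspace for the character `c ↦ ε((i,c)ₛ)`, which only depends on `i` modulo `C^⊥ₛ`.
Since `(·,·)ₛ` is nondegenerate, the pairing `V/C^⊥ₛ × C → 𝔽₂` is perfect, so `ī` runs once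
through every character of `C`. The usual averaging operators `∑_c χ(-c) g(c)` then split any `f`
into its components, and character orthogonality makes the splitting unique. -/

section JointEigenspace

variable {K A M : Type*} [Field K] [AddCommGroup M] [Module K M]

def jointEigenspace (ρ : A → Module.End K M) (χ : A → K) : Submodule K M :=
  ⨅ a, (ρ a).eigenspace (χ a)

lemma mem_jointEigenspace {ρ : A → Module.End K M} {χ : A → K} {m : M} :
    m ∈ jointEigenspace ρ χ ↔ ∀ a, ρ a m = χ a • m := by
  simp only [jointEigenspace, Submodule.mem_iInf, Module.End.mem_eigenspace_iff]

variable [AddCommGroup A] [Fintype A] (ρ : AddChar A (Module.End K M))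

/-- `card A` times the projection onto `jointEigenspace ρ χ`. -/
def isotypicProj (χ : AddChar A K) : Module.End K M := ∑ a, χ (-a) • ρ a

lemma isotypicProj_apply (χ : AddChar A K) (m : M) :
    isotypicProj ρ χ m = ∑ a, χ (-a) • ρ a m := by
  simp only [isotypicProj, LinearMap.sum_apply, LinearMap.smul_apply]

lemma isotypicProj_mem (χ : AddChar A K) (m : M) :
    isotypicProj ρ χ m ∈ jointEigenspace ρ χ := by
  refine mem_jointEigenspace.2 fun a => ?_
  calc ρ a (isotypicProj ρ χ m) = ∑ d, χ (-d) • ρ (a + d) m := by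
        simp only [isotypicProj_apply, map_sum, map_smul, AddChar.map_add_eq_mul,
          Module.End.mul_apply]
    _ = ∑ d, χ (a - d) • ρ d m :=
        Fintype.sum_equiv (Equiv.addLeft a) _ _ fun d => by simp [sub_eq_add_neg]
    _ = χ a • isotypicProj ρ χ m := by
        simp only [isotypicProj_apply, Finset.smul_sum, smul_smul, sub_eq_add_neg,
          AddChar.map_add_eq_mul]

lemma isotypicProj_apply_of_mem {χ χ' : AddChar A K} {m : M} (hm : m ∈ jointEigenspace ρ χ') :
    isotypicProj ρ χ m = (∑ a, (χ⁻¹ * χ') a) • m := by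
  simp only [isotypicProj_apply, mem_jointEigenspace.1 hm, smul_smul, Finset.sum_smul,
    AddChar.mul_apply, AddChar.inv_apply]

variable {B : Type*} [Fintype B] (ψ : B → AddChar A K)

lemma sum_isotypicProj (hψ : ∀ a ≠ 0, ∑ b, ψ b a = 0) (m : M) :
    ∑ b, isotypicProj ρ (ψ b) m = (Fintype.card B : K) • m := by
  simp only [isotypicProj_apply]
  rw [Finset.sum_comm, Finset.sum_eq_single 0]
  · simp [Nat.cast_smul_eq_nsmul]
  · intro a _ ha
    rw [← Finset.sum_smul, hψ _ (neg_ne_zero.2 ha), zero_smul]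
  · simp

variable [CharZero K]

lemma eq_zero_of_mem_jointEigenspace_of_sum_eq_zero (hψ : Function.Injective ψ) {D : B → M}
    (hD : ∀ b, D b ∈ jointEigenspace ρ (ψ b)) (hsum : ∑ b, D b = 0) : D = 0 := by
  funext b₀
  have h := congrArg (isotypicProj ρ (ψ b₀)) hsum
  rw [map_sum, map_zero, Finset.sum_eq_single b₀ (fun b _ hb => ?_) (by simp),
    isotypicProj_apply_of_mem ρ (hD b₀), inv_mul_cancel] at h
  · simpa using h
  · rw [isotypicProj_apply_of_mem ρ (hD b), AddChar.sum_eq_zero_iff_ne_zero.2, zero_smul]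
    -- the trivial character `0 : AddChar A K` is `1`
    change _ ≠ 1
    rwa [ne_eq, inv_mul_eq_one, hψ.eq_iff, eq_comm]

theorem existsUnique_sum_mem_jointEigenspace [Nonempty B] (hinj : Function.Injective ψ)
    (hψ : ∀ a ≠ 0, ∑ b, ψ b a = 0) (m : M) :
    ∃! D : B → M, (∀ b, D b ∈ jointEigenspace ρ (ψ b)) ∧ m = ∑ b, D b := by
  set E : B → M := fun b => (Fintype.card B : K)⁻¹ • isotypicProj ρ (ψ b) m
  have hE : ∀ b, E b ∈ jointEigenspace ρ (ψ b) :=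
    fun b => Submodule.smul_mem _ _ (isotypicProj_mem ρ _ m)
  have hEsum : ∑ b, E b = m := by
    rw [← Finset.smul_sum, sum_isotypicProj ρ ψ hψ, smul_smul,
      inv_mul_cancel₀ (Nat.cast_ne_zero.2 Fintype.card_ne_zero), one_smul]
  refine ⟨E, ⟨hE, hEsum.symm⟩, ?_⟩
  rintro D ⟨hD, rfl⟩
  refine sub_eq_zero.1 (eq_zero_of_mem_jointEigenspace_of_sum_eq_zero ρ ψ hinj (D := D - E)
    (fun b => sub_mem (hD b) (hE b)) ?_)
  simp only [Pi.sub_apply, Finset.sum_sub_distrib, hEsum, sub_self]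

end JointEigenspace

section Symplectic

variable {n : ℕ}

lemma symp_comm (v w : Vn n) : symp v w = symp w v := add_comm _ _

def sympForm : Vn n →ₗ[ZMod 2] Vn n →ₗ[ZMod 2] ZMod 2 :=
  LinearMap.mk₂ (ZMod 2) symp symp_add_left symp_smul_left
    (fun v w w' => by simp only [symp_comm v, symp_add_left])
    (fun c v w => by simp only [symp_comm v, symp_smul_left, smul_eq_mul])

lemma exists_symp_ne_zero {v : Vn n} (hv : v ≠ 0) : ∃ w, symp w v ≠ 0 := by
  by_contra! h
  refine hv (Prod.ext (funext fun k => ?_) (funext fun k => ?_))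
  · simpa [symp, Pi.single_apply] using h (0, Pi.single k 1)
  · simpa [symp, Pi.single_apply] using h (Pi.single k 1, 0)

variable (C : Submodule (ZMod 2) (Vn n))

lemma ker_sympForm_compl₂ :
    LinearMap.ker (sympForm.compl₂ C.subtype) = sympOrtho (C : Set (Vn n)) := by
  ext v
  simp [LinearMap.ext_iff, sympOrtho, sympForm]

def sympPairing : (Vn n ⧸ sympOrtho (C : Set (Vn n))) →ₗ[ZMod 2] C →ₗ[ZMod 2] ZMod 2 :=
  (sympOrtho (C : Set (Vn n))).liftQ _ (ker_sympForm_compl₂ C).ge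

lemma sympPairing_injective : Function.Injective (sympPairing C) :=
  LinearMap.ker_eq_bot.1 (Submodule.ker_liftQ_eq_bot' _ _ (ker_sympForm_compl₂ C).symm)

lemma exists_sympPairing_ne_zero {c : C} (hc : c ≠ 0) : ∃ q, sympPairing C q c ≠ 0 := by
  obtain ⟨w, hw⟩ := exists_symp_ne_zero (v := (c : Vn n)) (by simpa using hc)
  exact ⟨Submodule.Quotient.mk w, hw⟩

end Symplectic

lemma zmod2_eq_zero_or_eq_one (a : ZMod 2) : a = 0 ∨ a = 1 := by
  revert a; decide

lemma eps_add (a b : ZMod 2) : eps (a + b) = eps a * eps b := by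
  have h11 : (1 + 1 : ZMod 2) = 0 := rfl
  rcases zmod2_eq_zero_or_eq_one a with rfl | rfl <;>
    rcases zmod2_eq_zero_or_eq_one b with rfl | rfl <;> simp [eps, h11]

lemma eps_injective : Function.Injective eps := by
  intro a b
  rcases zmod2_eq_zero_or_eq_one a with rfl | rfl <;>
    rcases zmod2_eq_zero_or_eq_one b with rfl | rfl <;> norm_num [eps]

def epsChar : AddChar (ZMod 2) ℂ where
  toFun := eps
  map_zero_eq_one' := if_pos rfl
  map_add_eq_mul' := eps_add

lemma sum_eps_eq_zero {B : Type*} [AddCommGroup B] [Fintype B] {φ : B →+ ZMod 2}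
    (hφ : ∃ b, φ b ≠ 0) : ∑ b, eps (φ b) = 0 := by
  refine (AddChar.sum_eq_zero_iff_ne_zero (ψ := epsChar.compAddMonoidHom φ)).2 ?_
  obtain ⟨b, hb⟩ := hφ
  exact AddChar.ne_zero_iff.2 ⟨b, fun h => hb (eps_injective (h.trans (if_pos rfl).symm))⟩

section Stabilizer

variable {n : ℕ} {C : Submodule (ZMod 2) (Vn n)}

variable (C) in
def sympChar (q : Vn n ⧸ sympOrtho (C : Set (Vn n))) : AddChar C ℂ :=
  epsChar.compAddMonoidHom (sympPairing C q).toAddMonoidHom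

lemma sympChar_injective : Function.Injective (sympChar C) := fun _ _ h =>
  sympPairing_injective C (LinearMap.ext fun c => eps_injective (DFunLike.congr_fun h c))

lemma sum_sympChar_eq_zero [Fintype (Vn n ⧸ sympOrtho (C : Set (Vn n)))] {c : C} (hc : c ≠ 0) :
    ∑ q, sympChar C q c = 0 :=
  sum_eps_eq_zero (φ := ((sympPairing C).flip c).toAddMonoidHom) (exists_sympPairing_ne_zero C hc)

def pauliOp (v : Vn n) : Module.End ℂ ((Fin n → ZMod 2) → ℂ) where
  toFun := Wop v.1 v.2
  map_add' _ _ := funext fun _ => mul_add _ _ _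
  map_smul' _ _ := funext fun _ => mul_left_comm _ _ _

lemma pauliOp_zero : pauliOp (0 : Vn n) = 1 := by
  ext f x
  simp [pauliOp, Wop, eps]

def gOp (γ : C → ℂ) (c : C) : Module.End ℂ ((Fin n → ZMod 2) → ℂ) := γ c • pauliOp (c : Vn n)

lemma gamma_zero_eq_one {γ : C → ℂ} (hγ : γ 0 ≠ 0)
    (hmul : ∀ c c', gOp γ c * gOp γ c' = gOp γ (c + c')) : γ 0 = 1 := by
  have h := congrFun (LinearMap.congr_fun (hmul 0 0) fun _ => 1) 0
  simp only [gOp, add_zero, ZeroMemClass.coe_zero, pauliOp_zero, LinearMap.smul_apply,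
    Module.End.mul_apply, Module.End.one_apply, Pi.smul_apply, smul_eq_mul, mul_one] at h
  exact (mul_eq_left₀ hγ).1 h

lemma gOp_zero {γ : C → ℂ} (hγ : γ 0 = 1) : gOp γ 0 = 1 := by
  simp [gOp, hγ, pauliOp_zero]

lemma QgamSub_eq_jointEigenspace (γ : C → ℂ) (i : Vn n) :
    QgamSub C γ i = jointEigenspace (gOp γ) (sympChar C (Submodule.Quotient.mk i)) := by
  ext f
  simp only [mem_jointEigenspace, funext_iff]
  rfl

end Stabilizer

theorem QgamSub_direct_sum_general (n : ℕ) (C : Submodule (ZMod 2) (Vn n))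
    (γ : C → ℂ) (hγ : ∀ c : C, γ c ≠ 0)
    (hmul : ∀ c c' : C, ∀ (f : (Fin n → ZMod 2) → ℂ) (x : Fin n → ZMod 2),
      γ c * Wop (c : Vn n).1 (c : Vn n).2
          (fun y => γ c' * Wop (c' : Vn n).1 (c' : Vn n).2 f y) x
        = γ (c + c') * Wop ((c : Vn n) + (c' : Vn n)).1 ((c : Vn n) + (c' : Vn n)).2 f x) :
    (∀ i j : Vn n, i - j ∈ sympOrtho (C : Set (Vn n)) → QgamSub C γ i = QgamSub C γ j) ∧
    (∀ f : (Fin n → ZMod 2) → ℂ,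
      ∃! g : (Vn n ⧸ sympOrtho (C : Set (Vn n))) → ((Fin n → ZMod 2) → ℂ),
        (∀ i : Vn n, g (Submodule.Quotient.mk i) ∈ QgamSub C γ i) ∧ f = ∑ᶠ y, g y) := by
  classical
  have : Fintype C := Fintype.ofFinite C
  have : Fintype (Vn n ⧸ sympOrtho (C : Set (Vn n))) := Fintype.ofFinite _
  have hg : ∀ c c' : C, gOp γ c * gOp γ c' = gOp γ (c + c') :=
    fun c c' => LinearMap.ext fun f => funext (hmul c c' f)
  let ρ : AddChar C (Module.End ℂ ((Fin n → ZMod 2) → ℂ)) :=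
    ⟨gOp γ, gOp_zero (gamma_zero_eq_one (hγ 0) hg), fun c c' => (hg c c').symm⟩
  refine ⟨fun i j hij => ?_, fun f => ?_⟩
  · rw [QgamSub_eq_jointEigenspace, QgamSub_eq_jointEigenspace, (Submodule.Quotient.eq _).2 hij]
  · simp only [finsum_eq_sum_of_fintype, QgamSub_eq_jointEigenspace]
    refine (existsUnique_congr fun g => ?_).1 (existsUnique_sum_mem_jointEigenspace ρ
      (sympChar C) sympChar_injective (fun _ hc => sum_sympChar_eq_zero hc) f)
    rw [(Submodule.Quotient.mk_surjective _).forall]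
    rfl

/-- If the rescaled operators `g(c) = γ(c)·W(c₁,c₂)` (`c ∈ C`, `γ(c) ≠ 0`)
form a group: `g(c)∘g(c') = g(c+c')`, then `Q_γ(i)` depends only on the coset of `i`
modulo `C^⊥ₛ`, and the space of all functions `𝔽₂ⁿ → ℂ` is the internal direct sum of
the subspaces `Q_γ(ī)`, `ī ∈ V ⧸ C^⊥ₛ`. -/
theorem QgamSub_direct_sum (n : ℕ) (hn : 0 < n) (C : Submodule (ZMod 2) (Vn n))
    (γ : C → ℂ) (hγ : ∀ c : C, γ c ≠ 0)
    (hmul : ∀ c c' : C, ∀ (f : (Fin n → ZMod 2) → ℂ) (x : Fin n → ZMod 2),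
      γ c * Wop (c : Vn n).1 (c : Vn n).2
          (fun y => γ c' * Wop (c' : Vn n).1 (c' : Vn n).2 f y) x
        = γ (c + c') * Wop ((c : Vn n) + (c' : Vn n)).1 ((c : Vn n) + (c' : Vn n)).2 f x) :
    (∀ i j : Vn n, i - j ∈ sympOrtho (C : Set (Vn n)) → QgamSub C γ i = QgamSub C γ j) ∧
    (∀ f : (Fin n → ZMod 2) → ℂ,
      ∃! g : (Vn n ⧸ sympOrtho (C : Set (Vn n))) → ((Fin n → ZMod 2) → ℂ),
        (∀ i : Vn n, g (Submodule.Quotient.mk i) ∈ QgamSub C γ i) ∧ f = ∑ᶠ y, g y) :=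
  QgamSub_direct_sum_general n C γ hγ hmul
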